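/- For any ε > 0 and δ ∈ (0,1) with ε ≤ 2 log(1/δ), setting λ = 1 + 2 log(1/δ)/ε and σ² ≥ 2(ε + 2 log(1/δ))/ε², the inequality λ/σ² + log(1/δ)/(λ − 1) ≤ ε holds. -/

import Mathlib

/-! With `L = log (1/δ)` the choice of `λ` makes `λ - 1 = L / (ε/2)`, so the second term is `ε/2`
(or `0/0 = 0` when `L = 0`), and the bound on `σ²` is precisely `λ ≤ (ε/2) σ²`, so the first term is
at most `ε/2`. -/

lemma div_div_cancel_le {α : Type*} [CommGroupWithZero α] [Preorder α] (a : α) {b : α} (hb : 0 ≤ b) :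
    a / (a / b) ≤ b := by
  rcases eq_or_ne a 0 with rfl | ha
  · simpa using hb
  · rw [div_div_cancel₀ ha]

theorem rdp_conversion_inequality_general (ε δ σ lam : ℝ)
    (hε : 0 < ε)
    (hlam : lam = 1 + 2 * Real.log (1 / δ) / ε)
    (hσ : σ ^ 2 ≥ 2 * (ε + 2 * Real.log (1 / δ)) / ε ^ 2) :
    lam / σ ^ 2 + Real.log (1 / δ) / (lam - 1) ≤ ε := by
  set L := Real.log (1 / δ)
  have hlam_le : lam ≤ ε / 2 * σ ^ 2 :=
    calc lam = ε / 2 * (2 * (ε + 2 * L) / ε ^ 2) := by rw [hlam]; field_simp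
      _ ≤ ε / 2 * σ ^ 2 := by gcongr
  have hfirst : lam / σ ^ 2 ≤ ε / 2 := div_le_of_le_mul₀ (sq_nonneg σ) (by positivity) hlam_le
  have hsecond : L / (lam - 1) ≤ ε / 2 := by
    rw [hlam, add_sub_cancel_left, show 2 * L / ε = L / (ε / 2) by ring]
    exact div_div_cancel_le L (by positivity)
  linarith

theorem rdp_conversion_inequality (ε δ σ lam : ℝ)
    (hε : 0 < ε) (hδ0 : 0 < δ) (hδ1 : δ < 1)
    (hεbound : ε ≤ 2 * Real.log (1 / δ))
    (hlam : lam = 1 + 2 * Real.log (1 / δ) / ε)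
    (hσ : σ ^ 2 ≥ 2 * (ε + 2 * Real.log (1 / δ)) / ε ^ 2) :
    lam / σ ^ 2 + Real.log (1 / δ) / (lam - 1) ≤ ε :=
  rdp_conversion_inequality_general ε δ σ lam hε hlam hσ
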